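/- Define Ψ_F(x) = -ψ(1-x) - ψ(1+x) + ψ(1/2 - x/2) + ψ(1/2 + x/2) for x ∈ [0, 2/38]. Then Ψ_F(x) < 0 and Ψ_F is (weakly) decreasing on this interval. -/

import Mathlib

noncomputable def digamma (x : ℝ) : ℝ := deriv (fun y => Real.log (Real.Gamma y)) x

noncomputable def PsiF (x : ℝ) : ℝ :=
  -digamma (1 - x) - digamma (1 + x) + digamma (1 / 2 - x / 2) + digamma (1 / 2 + x / 2)

/-!
Legendre's duplication formula turns `Ψ_F(x) + 4 log 2` into
`(ψ(1 + x) - ψ(1 + x/2)) + (ψ(1 - x) - ψ(1 - x/2))`. The recurrence `ψ(a + 1) = ψ(a) + 1/a`,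
together with the monotonicity of `ψ` (log-convexity of `Γ`), gives
`ψ(b) - ψ(a) = ∑ₙ (1/(a + n) - 1/(b + n))` for `a ≤ b ≤ a + 1`. In the resulting series the term
with `m = n + 1` is `-(3/2) m x² / ((m² - x²/4)(m² - x²))`, which vanishes at `x = 0` and decreases on `[0, m)`.
Hence `Ψ_F` decreases on `[0, 1)` from `Ψ_F(0) = -4 log 2 < 0`.
-/

open Real Filter Topology Set

lemma differentiableAt_log_Gamma {x : ℝ} (hx : 0 < x) :
    DifferentiableAt ℝ (fun y => log (Gamma y)) x :=
  (differentiableAt_Gamma fun m => ((neg_nonpos.mpr m.cast_nonneg).trans_lt hx).ne').log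
    (Gamma_pos_of_pos hx).ne'

lemma hasDerivAt_log_Gamma {x : ℝ} (hx : 0 < x) :
    HasDerivAt (fun y => log (Gamma y)) (digamma x) x :=
  (differentiableAt_log_Gamma hx).hasDerivAt

lemma digamma_add_one {x : ℝ} (hx : 0 < x) : digamma (x + 1) = digamma x + x⁻¹ := by
  have hshift : HasDerivAt (fun y => log (Gamma (y + 1))) (digamma (x + 1)) x :=
    (hasDerivAt_log_Gamma (by linarith)).comp_add_const x 1
  have hsplit : HasDerivAt (fun y => log y + log (Gamma y)) (x⁻¹ + digamma x) x :=
    (hasDerivAt_log hx.ne').add (hasDerivAt_log_Gamma hx)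
  have heq : (fun y => log y + log (Gamma y)) =ᶠ[𝓝 x] fun y => log (Gamma (y + 1)) := by
    filter_upwards [eventually_gt_nhds hx] with y hy
    rw [Gamma_add_one hy.ne', log_mul hy.ne' (Gamma_pos_of_pos hy).ne']
  rw [← (hsplit.congr_of_eventuallyEq heq.symm).unique hshift, add_comm]

lemma digamma_add_nat {a : ℝ} (ha : 0 < a) (N : ℕ) :
    digamma (a + N) = digamma a + ∑ n ∈ Finset.range N, (a + n)⁻¹ := by
  induction N with
  | zero => simp
  | succ n ih =>
    rw [Nat.cast_succ, ← add_assoc, digamma_add_one (by positivity), ih, Finset.sum_range_succ,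
      add_assoc]

lemma log_Gamma_add_log_Gamma_add_half {y : ℝ} (hy : 0 < y) :
    log (Gamma y) + log (Gamma (y + 1 / 2)) =
      log (Gamma (2 * y)) + ((1 - 2 * y) * log 2 + log (√π)) := by
  have := congrArg log (Gamma_mul_Gamma_add_half y)
  rwa [log_mul (Gamma_pos_of_pos hy).ne' (Gamma_pos_of_pos (by linarith)).ne',
    log_mul (by positivity [Gamma_pos_of_pos (by linarith : 0 < 2 * y)]) (by positivity),
    log_mul (Gamma_pos_of_pos (by linarith)).ne' (by positivity), log_rpow two_pos,
    add_assoc] at this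

lemma digamma_add_digamma_add_half {s : ℝ} (hs : 0 < s) :
    digamma s + digamma (s + 1 / 2) = 2 * digamma (2 * s) - 2 * log 2 := by
  have hleft : HasDerivAt (fun y => log (Gamma y) + log (Gamma (y + 1 / 2)))
      (digamma s + digamma (s + 1 / 2)) s :=
    (hasDerivAt_log_Gamma hs).add ((hasDerivAt_log_Gamma (by linarith)).comp_add_const s _)
  have hdouble : HasDerivAt (fun y : ℝ => 2 * y) 2 s := by
    simpa using (hasDerivAt_id s).const_mul 2
  have hright : HasDerivAt
      (fun y => log (Gamma (2 * y)) + ((1 - 2 * y) * log 2 + log (√π)))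
      (digamma (2 * s) * 2 + (-2 * log 2)) s := by
    refine ((hasDerivAt_log_Gamma (by linarith)).comp s hdouble).add ?_
    simpa using ((hdouble.const_sub 1).mul_const (log 2)).add_const (log (√π))
  have heq : (fun y => log (Gamma y) + log (Gamma (y + 1 / 2))) =ᶠ[𝓝 s]
      fun y => log (Gamma (2 * y)) + ((1 - 2 * y) * log 2 + log (√π)) := by
    filter_upwards [eventually_gt_nhds hs] with y hy
    exact log_Gamma_add_log_Gamma_add_half hy
  rw [← (hright.congr_of_eventuallyEq heq).unique hleft]
  ring

lemma monotoneOn_digamma : MonotoneOn digamma (Ioi 0) := by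
  have hconv : ConvexOn ℝ (Ioi 0) fun y => log (Gamma y) := convexOn_log_Gamma
  exact hconv.monotoneOn_deriv fun x hx => differentiableAt_log_Gamma hx

lemma tendsto_digamma_add_nat_sub {a b : ℝ} (ha : 0 < a) (hab : a ≤ b) (hba : b ≤ a + 1) :
    Tendsto (fun N : ℕ => digamma (b + N) - digamma (a + N)) atTop (𝓝 0) := by
  have hb : 0 < b := ha.trans_le hab
  have hlower (N : ℕ) : 0 ≤ digamma (b + N) - digamma (a + N) :=
    sub_nonneg.2 <| monotoneOn_digamma (by simp only [mem_Ioi]; positivity)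
      (by simp only [mem_Ioi]; positivity) (by linarith)
  have hupper (N : ℕ) : digamma (b + N) - digamma (a + N) ≤ (a + N)⁻¹ := by
    have haN : 0 < a + N := by positivity
    have := monotoneOn_digamma (by simp only [mem_Ioi]; positivity)
      (by simp only [mem_Ioi]; positivity) (by linarith : b + N ≤ a + N + 1)
    linarith [digamma_add_one haN]
  exact squeeze_zero hlower hupper
    (tendsto_atTop_add_const_left _ a tendsto_natCast_atTop_atTop).inv_tendsto_atTop

lemma hasSum_inv_add_sub_inv_add {a b : ℝ} (ha : 0 < a) (hab : a ≤ b) (hba : b ≤ a + 1) :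
    HasSum (fun n : ℕ => (a + n)⁻¹ - (b + n)⁻¹) (digamma b - digamma a) := by
  have hnonneg (n : ℕ) : 0 ≤ (a + n)⁻¹ - (b + n)⁻¹ :=
    sub_nonneg.2 <| inv_anti₀ (by positivity) (by linarith)
  have hpartial (N : ℕ) : ∑ n ∈ Finset.range N, ((a + n)⁻¹ - (b + n)⁻¹) =
      (digamma b - digamma a) - (digamma (b + N) - digamma (a + N)) := by
    rw [Finset.sum_sub_distrib, digamma_add_nat ha, digamma_add_nat (ha.trans_le hab)]
    ring
  rw [hasSum_iff_tendsto_nat_of_nonneg hnonneg, funext hpartial]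
  simpa using (tendsto_digamma_add_nat_sub ha hab hba).const_sub (digamma b - digamma a)

lemma PsiF_eq {x : ℝ} (h₁ : -1 < x) (h₂ : x < 1) :
    PsiF x = digamma (1 + x) - digamma (1 + x / 2) - (digamma (1 - x / 2) - digamma (1 - x))
      - 4 * log 2 := by
  have hplus := digamma_add_digamma_add_half (s := 1 / 2 + x / 2) (by linarith)
  have hminus := digamma_add_digamma_add_half (s := 1 / 2 - x / 2) (by linarith)
  rw [show 1 / 2 + x / 2 + 1 / 2 = 1 + x / 2 by ring, show 2 * (1 / 2 + x / 2) = 1 + x by ring]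
    at hplus
  rw [show 1 / 2 - x / 2 + 1 / 2 = 1 - x / 2 by ring, show 2 * (1 / 2 - x / 2) = 1 - x by ring]
    at hminus
  rw [PsiF]
  linarith

lemma PsiF_zero : PsiF 0 = -4 * log 2 := by
  rw [PsiF_eq (by norm_num) (by norm_num)]
  norm_num

noncomputable def psiFTerm (m x : ℝ) : ℝ :=
  (m + x / 2)⁻¹ - (m + x)⁻¹ - ((m - x)⁻¹ - (m - x / 2)⁻¹)

lemma hasSum_psiFTerm {x : ℝ} (h₀ : 0 ≤ x) (h₁ : x < 1) :
    HasSum (fun n : ℕ => psiFTerm (n + 1) x) (PsiF x + 4 * log 2) := by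
  have hplus := hasSum_inv_add_sub_inv_add (a := 1 + x / 2) (b := 1 + x)
    (by linarith) (by linarith) (by linarith)
  have hminus := hasSum_inv_add_sub_inv_add (a := 1 - x) (b := 1 - x / 2)
    (by linarith) (by linarith) (by linarith)
  have hvalue : PsiF x + 4 * log 2 = digamma (1 + x) - digamma (1 + x / 2)
      - (digamma (1 - x / 2) - digamma (1 - x)) := by
    rw [PsiF_eq (by linarith) h₁]
    ring
  have hterms : (fun n : ℕ => psiFTerm (n + 1) x) = fun n : ℕ =>
      (1 + x / 2 + n)⁻¹ - (1 + x + n)⁻¹ - ((1 - x + n)⁻¹ - (1 - x / 2 + n)⁻¹) := by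
    funext n
    rw [psiFTerm]
    ring
  rw [hvalue, hterms]
  exact hplus.sub hminus

lemma psiFTerm_eq {m x : ℝ} (h₀ : 0 ≤ x) (hx : x < m) :
    psiFTerm m x = -(3 / 2 * m * x ^ 2 / ((m ^ 2 - x ^ 2 / 4) * (m ^ 2 - x ^ 2))) := by
  have h₁ : m - x ≠ 0 := by linarith
  have h₂ : m + x ≠ 0 := by linarith
  have h₃ : 2 * m - x ≠ 0 := by linarith
  have h₄ : 2 * m + x ≠ 0 := by linarith
  rw [psiFTerm, show m ^ 2 - x ^ 2 / 4 = (2 * m - x) * (2 * m + x) / 4 by ring,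
    show m ^ 2 - x ^ 2 = (m - x) * (m + x) by ring, show m - x / 2 = (2 * m - x) / 2 by ring,
    show m + x / 2 = (2 * m + x) / 2 by ring]
  field_simp
  ring

lemma antitoneOn_psiFTerm (m : ℝ) : AntitoneOn (psiFTerm m) (Ico 0 m) := by
  intro x ⟨hx₀, hxm⟩ y ⟨hy₀, hym⟩ hxy
  rw [psiFTerm_eq hx₀ hxm, psiFTerm_eq hy₀ hym, neg_le_neg_iff]
  have hm : 0 < m := hx₀.trans_lt hxm
  have hsq : x ^ 2 ≤ y ^ 2 := pow_le_pow_left₀ hx₀ hxy 2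
  have hy₁ : 0 < m ^ 2 - y ^ 2 / 4 := by nlinarith
  have hy₂ : 0 < m ^ 2 - y ^ 2 := by nlinarith
  apply div_le_div₀ (by positivity) (by gcongr) (by positivity)
  gcongr
  nlinarith

lemma antitoneOn_PsiF : AntitoneOn PsiF (Ico 0 1) := by
  intro x ⟨hx₀, hx₁⟩ y ⟨hy₀, hy₁⟩ hxy
  have hterm (n : ℕ) : psiFTerm (n + 1) y ≤ psiFTerm (n + 1) x := by
    have hn : (1 : ℝ) ≤ n + 1 := by linarith [n.cast_nonneg (α := ℝ)]
    exact antitoneOn_psiFTerm _ ⟨hx₀, by linarith⟩ ⟨hy₀, by linarith⟩ hxy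
  linarith [hasSum_le hterm (hasSum_psiFTerm hy₀ hy₁) (hasSum_psiFTerm hx₀ hx₁)]

theorem PsiF_neg_and_decreasing :
    (∀ x ∈ Set.Icc (0 : ℝ) (2 / 38), PsiF x < 0) ∧
      AntitoneOn PsiF (Set.Icc (0 : ℝ) (2 / 38)) := by
  have hanti : AntitoneOn PsiF (Icc 0 (2 / 38)) :=
    antitoneOn_PsiF.mono (Icc_subset_Ico_right (by norm_num))
  refine ⟨fun x hx => ?_, hanti⟩
  calc PsiF x ≤ PsiF 0 := hanti (left_mem_Icc.2 (by norm_num)) hx hx.1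
    _ = -4 * log 2 := PsiF_zero
    _ < 0 := by linarith [log_pos one_lt_two]
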